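/- In the setting of the insurance game with standard payoffs Yᵢ determined by the fair benefit shares αᵢ = E_{Q*}[(Xᵢ/S^X)(S^X − K)^+] / P((S^X − k)^+) (i = 1,…,N), the shareholder's net position satisfies P(X₀ − Y₀) = 0 and k₀ = E_{Q*}[Y₀], where Q* ∈ ∇P(S^X). -/

import Mathlib

/-!
The scenario `Q*` attains `P` on `S^X`. Since `P` is comonotone additive and dominates every
`E_Q`, `Q*` then attains `P` on every `f(S^X)` with `f` and `id - f` nondecreasing: `f(S^X)` and
`S^X - f(S^X)` are comonotone with sum `S^X`, so both inequalities `E_{Q*} ≤ P` are equalities.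

The net position is `X₀ - Y₀ = α₀ (S^X - k) + (1 - α₀) (S^X - k)⁺ - (S^X - K)⁺`, and the fair
shares give `(1 - α₀) P((S^X - k)⁺) = E_{Q*}[(S^X - K)⁺] ∈ [0, P((S^X - k)⁺)]`. Hence
`α₀ ∈ [0, 1]`, which makes `X₀ - Y₀` such an `f(S^X)`, and its `Q*`-mean is
`α₀ (E_{Q*}[S^X] - k) + (1 - α₀) P((S^X - k)⁺) - E_{Q*}[(S^X - K)⁺] = 0`.
So `P(X₀ - Y₀) = E_{Q*}[X₀ - Y₀] = 0` and `E_{Q*}[Y₀] = k₀`.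
-/

open MeasureTheory

/-- Two random variables are comonotonic if both are nondecreasing functions
of a common random variable. -/
def Comonotone {Ω : Type*} (ξ η : Ω → ℝ) : Prop :=
  ∃ (ζ : Ω → ℝ) (f g : ℝ → ℝ), Monotone f ∧ Monotone g ∧ ξ = f ∘ ζ ∧ η = g ∘ ζ

lemma monotone_max_sub_zero (c : ℝ) : Monotone fun s : ℝ => max (s - c) 0 :=
  fun _ _ h => max_le_max (sub_le_sub_right h c) le_rfl

lemma monotone_sub_max_sub_zero (c : ℝ) : Monotone fun s : ℝ => s - max (s - c) 0 := by
  intro x y h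
  simp only [max_def]; split_ifs <;> linarith

section Attainment

variable {Ω : Type*} {ξ : Ω → ℝ} {f : ℝ → ℝ}

lemma Monotone.exists_abs_comp_le (hf : Monotone f) (hξ : ∃ C, ∀ ω, |ξ ω| ≤ C) :
    ∃ C, ∀ ω, |f (ξ ω)| ≤ C := by
  obtain ⟨C, hC⟩ := hξ
  refine ⟨max |f (-C)| |f C|, fun ω => abs_le.2 ⟨?_, ?_⟩⟩
  · calc -max |f (-C)| |f C| ≤ -|f (-C)| := neg_le_neg (le_max_left _ _)
      _ ≤ f (-C) := neg_abs_le _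
      _ ≤ f (ξ ω) := hf (neg_le_of_abs_le (hC ω))
  · calc f (ξ ω) ≤ f C := hf (le_of_abs_le (hC ω))
      _ ≤ |f C| := le_abs_self _
      _ ≤ max |f (-C)| |f C| := le_max_right _ _

variable [MeasurableSpace Ω] {Q : Measure Ω}

lemma Monotone.integrable_comp [IsFiniteMeasure Q] (hf : Monotone f) (hξm : Measurable ξ)
    (hξb : ∃ C, ∀ ω, |ξ ω| ≤ C) : Integrable (fun ω => f (ξ ω)) Q := by
  obtain ⟨C, hC⟩ := hf.exists_abs_comp_le hξb
  exact .of_bound (hf.measurable.comp hξm).aestronglyMeasurable C (.of_forall hC)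

theorem integral_comp_eq_of_integral_eq [IsFiniteMeasure Q] {P : (Ω → ℝ) → ℝ}
    (hdom : ∀ ζ : Ω → ℝ, Measurable ζ → (∃ C : ℝ, ∀ ω, |ζ ω| ≤ C) → ∫ ω, ζ ω ∂Q ≤ P ζ)
    (hcom : ∀ ξ η : Ω → ℝ, Comonotone ξ η → P (ξ + η) = P ξ + P η)
    (hξm : Measurable ξ) (hξb : ∃ C, ∀ ω, |ξ ω| ≤ C) (hξ : ∫ ω, ξ ω ∂Q = P ξ)
    (hf : Monotone f) (hf' : Monotone fun s => s - f s) :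
    ∫ ω, f (ξ ω) ∂Q = P (fun ω => f (ξ ω)) := by
  have hsplit : (fun ω => f (ξ ω)) + (fun ω => ξ ω - f (ξ ω)) = ξ := by
    funext ω; simp
  have hP : P ((fun ω => f (ξ ω)) + fun ω => ξ ω - f (ξ ω)) =
      P (fun ω => f (ξ ω)) + P (fun ω => ξ ω - f (ξ ω)) :=
    hcom _ _ ⟨ξ, f, _, hf, hf', rfl, rfl⟩
  rw [hsplit] at hP
  have hint : ∫ ω, f (ξ ω) ∂Q + ∫ ω, ξ ω - f (ξ ω) ∂Q = ∫ ω, ξ ω ∂Q := by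
    rw [← integral_add (hf.integrable_comp hξm hξb) (hf'.integrable_comp hξm hξb)]
    simp
  have h₁ : ∫ ω, f (ξ ω) ∂Q ≤ P (fun ω => f (ξ ω)) :=
    hdom _ (hf.measurable.comp hξm) (hf.exists_abs_comp_le hξb)
  have h₂ : ∫ ω, ξ ω - f (ξ ω) ∂Q ≤ P (fun ω => ξ ω - f (ξ ω)) :=
    hdom _ (hf'.measurable.comp hξm) (hf'.exists_abs_comp_le hξb)
  linarith

end Attainment

lemma Finset.sum_div_sum_mul {ι : Type*} (s : Finset ι) (x : ι → ℝ) {c : ℝ}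
    (hc : ∑ i ∈ s, x i = 0 → c = 0) : ∑ i ∈ s, x i / (∑ j ∈ s, x j) * c = c := by
  rw [← Finset.sum_mul, ← Finset.sum_div]
  by_cases hs : ∑ i ∈ s, x i = 0
  · simp [hs, hc hs]
  · rw [div_self hs, one_mul]

section Shares

variable {Ω ι : Type*} (s : Finset ι) {X : ι → Ω → ℝ}

lemma exists_abs_sum_le (hXpos : ∀ i ω, 0 ≤ X i ω) (hXb : ∀ i, ∃ C : ℝ, ∀ ω, X i ω ≤ C)
    {S : Ω → ℝ} (hS : ∀ ω, S ω = ∑ i ∈ s, X i ω) : ∃ C, ∀ ω, |S ω| ≤ C := by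
  choose C hC using hXb
  refine ⟨∑ i ∈ s, C i, fun ω => hS ω ▸ abs_le.2
    ⟨by linarith [Finset.sum_nonneg fun i (_ : i ∈ s) => hXpos i ω,
        Finset.sum_nonneg fun i (_ : i ∈ s) => (hXpos i ω).trans (hC i ω)],
      Finset.sum_le_sum fun i _ => hC i ω⟩⟩

variable [MeasurableSpace Ω] {Q : Measure Ω}

lemma measurable_of_eq_finset_sum (hXm : ∀ i, Measurable (X i)) {S : Ω → ℝ}
    (hS : ∀ ω, S ω = ∑ i ∈ s, X i ω) : Measurable S := by
  rw [funext hS]; exact Finset.measurable_sum _ fun i _ => hXm i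

lemma sum_integral_div_mul_eq (hXpos : ∀ i ω, 0 ≤ X i ω) (hXm : ∀ i, Measurable (X i))
    {S g : Ω → ℝ} (hS : ∀ ω, S ω = ∑ i ∈ s, X i ω) (hg : Integrable g Q)
    (hg0 : ∀ ω, S ω = 0 → g ω = 0) :
    ∑ i ∈ s, ∫ ω, X i ω / S ω * g ω ∂Q = ∫ ω, g ω ∂Q := by
  rw [← integral_finsetSum]
  · congr with ω
    simp_rw [hS] at hg0 ⊢
    exact s.sum_div_sum_mul _ (hg0 ω)
  · intro i hi
    have hm := (hXm i).div (measurable_of_eq_finset_sum s hXm hS)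
    refine hg.bdd_mul (c := 1) hm.aestronglyMeasurable (.of_forall fun ω => ?_)
    rw [Real.norm_eq_abs, abs_div, abs_of_nonneg (hXpos i ω), hS,
      abs_of_nonneg (Finset.sum_nonneg fun j _ => hXpos j ω)]
    exact div_le_one_of_le₀ (Finset.single_le_sum (fun j _ => hXpos j ω) hi)
      (Finset.sum_nonneg fun j _ => hXpos j ω)

lemma sum_mul_eq_integral_of_fairShare [IsFiniteMeasure Q] (hXpos : ∀ i ω, 0 ≤ X i ω)
    (hXm : ∀ i, Measurable (X i)) (hXb : ∀ i, ∃ C : ℝ, ∀ ω, X i ω ≤ C) {S : Ω → ℝ}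
    (hS : ∀ ω, S ω = ∑ i ∈ s, X i ω) {K p : ℝ} (hK : 0 ≤ K) (hp : p ≠ 0) {α : ι → ℝ}
    (hα : ∀ i ∈ s, α i = (∫ ω, X i ω / S ω * max (S ω - K) 0 ∂Q) / p) :
    (∑ i ∈ s, α i) * p = ∫ ω, max (S ω - K) 0 ∂Q := by
  rw [Finset.sum_congr rfl hα, ← Finset.sum_div, div_mul_cancel₀ _ hp]
  refine sum_integral_div_mul_eq s hXpos hXm hS ((monotone_max_sub_zero K).integrable_comp
    (measurable_of_eq_finset_sum s hXm hS) (exists_abs_sum_le s hXpos hXb hS)) fun ω h => ?_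
  rw [h, max_eq_right (by linarith)]

end Shares

def netPosition (a k K s : ℝ) : ℝ := a * (s - k) + (1 - a) * max (s - k) 0 - max (s - K) 0

lemma netPosition_eq {k₀ : ℝ} (hk₀ : 0 ≤ k₀) (a k s : ℝ) :
    k₀ - (if s ≤ k then k₀ + a * (k - s) else max (k + k₀ - s) 0) =
      netPosition a k (k + k₀) s := by
  unfold netPosition
  split_ifs with h
  · rw [max_eq_right (by linarith), max_eq_right (by linarith)]; ring
  · simp only [max_def]; split_ifs <;> linarith

lemma monotone_netPosition {a k K : ℝ} (ha₀ : 0 ≤ a) (hkK : k ≤ K) :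
    Monotone (netPosition a k K) := by
  intro x y hxy
  unfold netPosition
  simp only [max_def]; split_ifs <;> nlinarith [mul_nonneg ha₀ (sub_nonneg.2 hxy)]

lemma monotone_sub_netPosition {a k K : ℝ} (ha₁ : a ≤ 1) (hkK : k ≤ K) :
    Monotone fun s => s - netPosition a k K s := by
  intro x y hxy
  unfold netPosition
  simp only [max_def]; split_ifs <;> nlinarith [mul_nonneg (sub_nonneg.2 ha₁) (sub_nonneg.2 hxy)]

lemma integral_netPosition {Ω : Type*} [MeasurableSpace Ω] {Q : Measure Ω} [IsProbabilityMeasure Q]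
    {ξ : Ω → ℝ} (hξm : Measurable ξ) (hξb : ∃ C, ∀ ω, |ξ ω| ≤ C) (a k K : ℝ) :
    ∫ ω, netPosition a k K (ξ ω) ∂Q =
      a * (∫ ω, ξ ω ∂Q - k) + (1 - a) * ∫ ω, max (ξ ω - k) 0 ∂Q - ∫ ω, max (ξ ω - K) 0 ∂Q := by
  have hξi : Integrable ξ Q := monotone_id.integrable_comp hξm hξb
  have hξki : Integrable (fun ω => ξ ω - k) Q := hξi.sub (integrable_const k)
  have hki := (monotone_max_sub_zero k).integrable_comp (Q := Q) hξm hξb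
  have hKi := (monotone_max_sub_zero K).integrable_comp (Q := Q) hξm hξb
  have hsumi : Integrable (fun ω => a * (ξ ω - k) + (1 - a) * max (ξ ω - k) 0) Q :=
    (hξki.const_mul a).add (hki.const_mul _)
  unfold netPosition
  rw [integral_sub hsumi hKi,
    integral_add (hξki.const_mul a) (hki.const_mul _),
    integral_const_mul, integral_const_mul, integral_sub hξi (integrable_const k)]
  simp

lemma integral_max_sub_zero_anti {Ω : Type*} [MeasurableSpace Ω] {Q : Measure Ω}
    [IsFiniteMeasure Q] {ξ : Ω → ℝ} (hξm : Measurable ξ) (hξb : ∃ C, ∀ ω, |ξ ω| ≤ C) {k K : ℝ}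
    (hkK : k ≤ K) : ∫ ω, max (ξ ω - K) 0 ∂Q ≤ ∫ ω, max (ξ ω - k) 0 ∂Q :=
  integral_mono ((monotone_max_sub_zero K).integrable_comp hξm hξb)
    ((monotone_max_sub_zero k).integrable_comp hξm hξb) fun ω => max_le_max (by linarith) le_rfl

theorem stmt_15_general {Ω : Type*} [MeasurableSpace Ω]
    (P : (Ω → ℝ) → ℝ) (S : Set (Measure Ω))
    (hSprob : ∀ Q ∈ S, IsProbabilityMeasure Q)
    (hdom : ∀ ζ : Ω → ℝ, Measurable ζ → (∃ C : ℝ, ∀ ω, |ζ ω| ≤ C) →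
      ∀ Q ∈ S, ∫ ω, ζ ω ∂Q ≤ P ζ)
    (hcom : ∀ ξ η : Ω → ℝ, Comonotone ξ η → P (ξ + η) = P ξ + P η)
    (N : ℕ) (X : Fin (N + 1) → Ω → ℝ)
    (hXpos : ∀ i ω, 0 ≤ X i ω) (hXm : ∀ i, Measurable (X i))
    (hXb : ∀ i, ∃ C : ℝ, ∀ ω, X i ω ≤ C)
    (k₀ : ℝ) (hk₀ : 0 < k₀) (hX0 : ∀ ω, X 0 ω = k₀)
    (SX : Ω → ℝ) (hSX : ∀ ω, SX ω = ∑ i ∈ Finset.univ.erase 0, X i ω)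
    (k K : ℝ) (hk : k = P SX) (hKdef : K = k + k₀)
    (hdef : 0 < P (fun ω => max (SX ω - k) 0))
    (Qstar : Measure Ω) (hQS : Qstar ∈ S) (hQSX : ∫ ω, SX ω ∂Qstar = P SX)
    (α : Fin (N + 1) → ℝ)
    (hαi : ∀ i : Fin (N + 1), i ≠ 0 → α i =
      (∫ ω, X i ω / SX ω * max (SX ω - K) 0 ∂Qstar) / P (fun ω => max (SX ω - k) 0))
    (hα0 : α 0 = 1 - ∑ i ∈ Finset.univ.erase 0, α i)
    (Y : Fin (N + 1) → Ω → ℝ)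
    (hY0 : ∀ ω, Y 0 ω =
      (if SX ω ≤ k then k₀ + α 0 * (k - SX ω) else max (K - SX ω) 0)) :
    P (fun ω => X 0 ω - Y 0 ω) = 0 ∧ k₀ = ∫ ω, Y 0 ω ∂Qstar := by
  subst hKdef
  have := hSprob Qstar hQS
  have hSXm := measurable_of_eq_finset_sum _ hXm hSX
  have hSXb := exists_abs_sum_le _ hXpos hXb hSX
  have hattain {f : ℝ → ℝ} (hf : Monotone f) (hf' : Monotone fun s => s - f s) :
      ∫ ω, f (SX ω) ∂Qstar = P (fun ω => f (SX ω)) :=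
    integral_comp_eq_of_integral_eq (fun ζ hm hb => hdom ζ hm hb Qstar hQS) hcom hSXm hSXb hQSX hf hf'
  have hk_nonneg : 0 ≤ k :=
    hk ▸ hQSX ▸ integral_nonneg fun ω => hSX ω ▸ Finset.sum_nonneg fun i _ => hXpos i ω
  set p := P fun ω => max (SX ω - k) 0
  set e := ∫ ω, max (SX ω - (k + k₀)) 0 ∂Qstar
  have hp : ∫ ω, max (SX ω - k) 0 ∂Qstar = p :=
    hattain (monotone_max_sub_zero k) (monotone_sub_max_sub_zero k)
  have he : (1 - α 0) * p = e := by
    rw [hα0, sub_sub_cancel]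
    exact sum_mul_eq_integral_of_fairShare _ hXpos hXm hXb hSX (by linarith) hdef.ne'
      fun i hi => hαi i (Finset.ne_of_mem_erase hi)
  have hα₀ : 0 ≤ α 0 ∧ α 0 ≤ 1 := by
    have : e ≤ p := hp ▸ integral_max_sub_zero_anti hSXm hSXb (by linarith)
    have : 0 ≤ e := integral_nonneg fun ω => le_max_right _ _
    constructor <;> nlinarith
  have hnet_mono := monotone_netPosition hα₀.1 (by linarith : k ≤ k + k₀)
  have hnet (ω : Ω) : X 0 ω - Y 0 ω = netPosition (α 0) k (k + k₀) (SX ω) := by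
    rw [hX0, hY0, netPosition_eq hk₀.le]
  have hint : ∫ ω, netPosition (α 0) k (k + k₀) (SX ω) ∂Qstar = 0 := by
    rw [integral_netPosition hSXm hSXb, hQSX, ← hk, hp, he]; ring
  constructor
  · rw [funext hnet, ← hattain hnet_mono (monotone_sub_netPosition hα₀.2 (by linarith)), hint]
  · have hY (ω : Ω) : Y 0 ω = k₀ - netPosition (α 0) k (k + k₀) (SX ω) := by
      linarith [hnet ω, hX0 ω]
    rw [funext hY, integral_sub (integrable_const _) (hnet_mono.integrable_comp hSXm hSXb), hint]
    simp

/-- In the insurance game with standard payoffs determined by the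
fair benefit shares αᵢ = E_{Q*}[(Xᵢ/S^X)(S^X−K)⁺]/P((S^X−k)⁺), the shareholder's
net position satisfies P(X₀ − Y₀) = 0 and k₀ = E_{Q*}[Y₀]. -/
theorem stmt_15 {Ω : Type*} [MeasurableSpace Ω] (μ : Measure Ω) [IsProbabilityMeasure μ]
    (P : (Ω → ℝ) → ℝ) (S : Set (Measure Ω))
    (hSprob : ∀ Q ∈ S, IsProbabilityMeasure Q)
    (hSac : ∀ Q ∈ S, Q ≪ μ)
    (hdom : ∀ ζ : Ω → ℝ, Measurable ζ → (∃ C : ℝ, ∀ ω, |ζ ω| ≤ C) →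
      ∀ Q ∈ S, ∫ ω, ζ ω ∂Q ≤ P ζ)
    (hcom : ∀ ξ η : Ω → ℝ, Comonotone ξ η → P (ξ + η) = P ξ + P η)
    (hhom : ∀ (c : ℝ), 0 ≤ c → ∀ ξ : Ω → ℝ, P (fun ω => c * ξ ω) = c * P ξ)
    (htrans : ∀ (ξ : Ω → ℝ) (a : ℝ), P (fun ω => ξ ω + a) = P ξ + a)
    (N : ℕ) (X : Fin (N + 1) → Ω → ℝ)
    (hXpos : ∀ i ω, 0 ≤ X i ω) (hXm : ∀ i, Measurable (X i))
    (hXb : ∀ i, ∃ C : ℝ, ∀ ω, X i ω ≤ C)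
    (k₀ : ℝ) (hk₀ : 0 < k₀) (hX0 : ∀ ω, X 0 ω = k₀)
    (SX : Ω → ℝ) (hSX : ∀ ω, SX ω = ∑ i ∈ Finset.univ.erase 0, X i ω)
    (k K : ℝ) (hk : k = P SX) (hKdef : K = k + k₀)
    (hdef : 0 < P (fun ω => max (SX ω - k) 0))
    (Qstar : Measure Ω) (hQS : Qstar ∈ S) (hQSX : ∫ ω, SX ω ∂Qstar = P SX)
    (α : Fin (N + 1) → ℝ)
    (hαi : ∀ i : Fin (N + 1), i ≠ 0 → α i =
      (∫ ω, X i ω / SX ω * max (SX ω - K) 0 ∂Qstar) / P (fun ω => max (SX ω - k) 0))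
    (hα0 : α 0 = 1 - ∑ i ∈ Finset.univ.erase 0, α i)
    (Y : Fin (N + 1) → Ω → ℝ)
    (hYi : ∀ i : Fin (N + 1), i ≠ 0 → ∀ ω, Y i ω =
      (if SX ω ≤ k then X i ω + α i * (k - SX ω)
        else X i ω * min (K / SX ω) 1))
    (hY0 : ∀ ω, Y 0 ω =
      (if SX ω ≤ k then k₀ + α 0 * (k - SX ω) else max (K - SX ω) 0)) :
    P (fun ω => X 0 ω - Y 0 ω) = 0 ∧ k₀ = ∫ ω, Y 0 ω ∂Qstar :=
  stmt_15_general P S hSprob hdom hcom N X hXpos hXm hXb k₀ hk₀ hX0 SX hSX k K hk hKdef hdef Qstar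
    hQS hQSX α hαi hα0 Y hY0
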